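/- arXiv:1802.05071 — 3 statements merged into one kernel-verified Lean document; each statement's English description precedes it below -/
import Mathlib

section
/- Let β > 0 and set γ_n = (2n)^{−β/(2√2)}·exp(√2·β·n). Then for every x > 0, ⌊e^n⌋·P(exp(β√n·ξ) > γ_n·x) → (1/√(2π))·x^{−√2/β} as n → ∞, where ξ is standard normal. -/
/-!
With `s = √(2n)` and `L = √2 log x / β`, the exceedance event is `{ξ > t}` for the level
`t = s + (L - log s) / s`. Then `t ∼ s` and `t²/2 = s²/2 + L - log s + o(1)`, so Mills' ratio
`P(ξ > t) ∼ exp (-t²/2) / (√(2π) t)` gives `exp (s²/2) P(ξ > t) → exp (-L) / √(2π)`; here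
`exp (s²/2) = eⁿ ∼ ⌊eⁿ⌋` and `exp (-L) = x ^ (-√2/β)`. Mills' ratio follows from the bounds
`t / (1 + t²) · exp (-t²/2) ≤ ∫_t^∞ exp (-y²/2) dy ≤ exp (-t²/2) / t`, obtained by comparing the
integrand with `y exp (-y²/2)` and `(1 + y⁻²) exp (-y²/2)`, whose antiderivatives are explicit.
-/

open MeasureTheory ProbabilityTheory Filter Real Set Topology

theorem tendsto_int_floor_div_atTop {R : Type*} [TopologicalSpace R] [Field R] [LinearOrder R]
    [IsStrictOrderedRing R] [OrderTopology R] [FloorRing R] :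
    Tendsto (fun x : R ↦ (⌊x⌋ : R) / x) atTop (𝓝 1) :=
  tendsto_nat_floor_div_atTop.congr' <| by
    filter_upwards [eventually_ge_atTop 0] with x hx
    rw [natCast_floor_eq_intCast_floor hx]

lemma integrable_exp_neg_sq_div_two : Integrable fun y : ℝ ↦ exp (-y ^ 2 / 2) := by
  convert integrable_exp_neg_mul_sq (b := 1 / 2) one_half_pos using 3
  ring

lemma integrable_mul_exp_neg_sq_div_two : Integrable fun y : ℝ ↦ y * exp (-y ^ 2 / 2) := by
  convert integrable_mul_exp_neg_mul_sq (b := 1 / 2) one_half_pos using 4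
  ring

lemma tendsto_exp_neg_sq_div_two_atTop : Tendsto (fun y : ℝ ↦ exp (-y ^ 2 / 2)) atTop (𝓝 0) := by
  have h : Tendsto (fun y : ℝ ↦ y ^ 2 / 2) atTop atTop :=
    (tendsto_pow_atTop two_ne_zero).atTop_div_const two_pos
  simpa only [Function.comp_def, neg_div] using tendsto_exp_neg_atTop_nhds_zero.comp h

lemma hasDerivAt_neg_exp_neg_sq_div_two (y : ℝ) :
    HasDerivAt (fun u ↦ -exp (-u ^ 2 / 2)) (y * exp (-y ^ 2 / 2)) y := by
  have h : HasDerivAt (fun u : ℝ ↦ -u ^ 2 / 2) (-y) y :=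
    ((hasDerivAt_pow 2 y).neg.div_const 2).congr_deriv (by ring)
  exact h.exp.neg.congr_deriv (by ring)

lemma hasDerivAt_neg_exp_neg_sq_div_two_div {y : ℝ} (hy : y ≠ 0) :
    HasDerivAt (fun u ↦ -exp (-u ^ 2 / 2) / u) ((1 + (y ^ 2)⁻¹) * exp (-y ^ 2 / 2)) y :=
  ((hasDerivAt_neg_exp_neg_sq_div_two y).div (hasDerivAt_id' y) hy).congr_deriv
    (by field_simp; ring)

lemma integral_Ioi_mul_exp_neg_sq_div_two (t : ℝ) :
    ∫ y in Ioi t, y * exp (-y ^ 2 / 2) = exp (-t ^ 2 / 2) := by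
  rw [integral_Ioi_of_hasDerivAt_of_tendsto' (fun y _ ↦ hasDerivAt_neg_exp_neg_sq_div_two y)
    integrable_mul_exp_neg_sq_div_two.integrableOn
    (by simpa using tendsto_exp_neg_sq_div_two_atTop.neg)]
  ring

lemma integral_Ioi_one_add_inv_sq_mul_exp_neg_sq_div_two {t : ℝ} (ht : 0 < t) :
    ∫ y in Ioi t, (1 + (y ^ 2)⁻¹) * exp (-y ^ 2 / 2) = exp (-t ^ 2 / 2) / t := by
  rw [integral_Ioi_of_hasDerivAt_of_nonneg'
    (fun y hy ↦ hasDerivAt_neg_exp_neg_sq_div_two_div (ht.trans_le hy).ne')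
    (fun y _ ↦ by positivity)
    (by simpa [neg_div] using (tendsto_exp_neg_sq_div_two_atTop.div_atTop tendsto_id).neg)]
  ring

lemma integral_Ioi_exp_neg_sq_div_two_le {t : ℝ} (ht : 0 < t) :
    ∫ y in Ioi t, exp (-y ^ 2 / 2) ≤ exp (-t ^ 2 / 2) / t := by
  rw [le_div_iff₀ ht, ← integral_mul_const, ← integral_Ioi_mul_exp_neg_sq_div_two t]
  refine setIntegral_mono_on (integrable_exp_neg_sq_div_two.integrableOn.mul_const t)
    integrable_mul_exp_neg_sq_div_two.integrableOn measurableSet_Ioi fun y hy ↦ ?_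
  rw [mul_comm]
  exact mul_le_mul_of_nonneg_right (le_of_lt hy) (exp_pos _).le

lemma le_integral_Ioi_exp_neg_sq_div_two {t : ℝ} (ht : 0 < t) :
    t / (1 + t ^ 2) * exp (-t ^ 2 / 2) ≤ ∫ y in Ioi t, exp (-y ^ 2 / 2) := by
  have hmono : exp (-t ^ 2 / 2) / t ≤ (1 + (t ^ 2)⁻¹) * ∫ y in Ioi t, exp (-y ^ 2 / 2) := by
    rw [← integral_Ioi_one_add_inv_sq_mul_exp_neg_sq_div_two ht, ← integral_const_mul]
    refine integral_mono_of_nonneg (ae_restrict_of_forall_mem measurableSet_Ioi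
      fun y _ ↦ by positivity) (integrable_exp_neg_sq_div_two.integrableOn.const_mul _)
      (ae_restrict_of_forall_mem measurableSet_Ioi fun y hy ↦ ?_)
    have hty : t ^ 2 ≤ y ^ 2 := pow_le_pow_left₀ ht.le (le_of_lt hy) 2
    dsimp only
    gcongr
  calc t / (1 + t ^ 2) * exp (-t ^ 2 / 2)
      = (exp (-t ^ 2 / 2) / t) / (1 + (t ^ 2)⁻¹) := by field_simp; ring
    _ ≤ ∫ y in Ioi t, exp (-y ^ 2 / 2) := by rwa [div_le_iff₀' (by positivity)]

lemma gaussianReal_Ioi_toReal (t : ℝ) :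
    (gaussianReal 0 1 (Ioi t)).toReal = (√(2 * π))⁻¹ * ∫ y in Ioi t, exp (-y ^ 2 / 2) := by
  rw [gaussianReal_apply_eq_integral 0 one_ne_zero, ENNReal.toReal_ofReal
    (setIntegral_nonneg measurableSet_Ioi fun y _ ↦ gaussianPDFReal_nonneg 0 1 y),
    ← integral_const_mul]
  simp [gaussianPDFReal]

/-- Mills' ratio. -/
theorem tendsto_gaussianReal_Ioi_mul_atTop :
    Tendsto (fun t ↦ (gaussianReal 0 1 (Ioi t)).toReal * (√(2 * π) * t * exp (t ^ 2 / 2)))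
      atTop (𝓝 1) := by
  have hlower : Tendsto (fun t : ℝ ↦ 1 - (1 + t ^ 2)⁻¹) atTop (𝓝 1) := by
    simpa using tendsto_const_nhds.sub (tendsto_inv_atTop_zero.comp
      (tendsto_atTop_add_const_left _ (1 : ℝ) (tendsto_pow_atTop two_ne_zero)))
  have hnormalize (t : ℝ) : (gaussianReal 0 1 (Ioi t)).toReal * (√(2 * π) * t * exp (t ^ 2 / 2))
      = (∫ y in Ioi t, exp (-y ^ 2 / 2)) * (t * exp (t ^ 2 / 2)) := by
    rw [gaussianReal_Ioi_toReal]
    field_simp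
  simp_rw [hnormalize]
  refine tendsto_of_tendsto_of_tendsto_of_le_of_le' hlower tendsto_const_nhds ?_ ?_ <;>
    filter_upwards [eventually_gt_atTop 0] with t ht
  · calc 1 - (1 + t ^ 2)⁻¹ = t / (1 + t ^ 2) * exp (-t ^ 2 / 2) * (t * exp (t ^ 2 / 2)) := by
          rw [neg_div, exp_neg]
          field_simp
          ring
      _ ≤ _ := by gcongr; exact le_integral_Ioi_exp_neg_sq_div_two ht
  · calc _ ≤ exp (-t ^ 2 / 2) / t * (t * exp (t ^ 2 / 2)) := by
          gcongr; exact integral_Ioi_exp_neg_sq_div_two_le ht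
      _ = 1 := by
          rw [neg_div, exp_neg]
          field_simp

noncomputable def tailLevel (L s : ℝ) : ℝ := s + (L - log s) / s

lemma tendsto_log_sub_div_atTop (L : ℝ) : Tendsto (fun s ↦ (L - log s) / s) atTop (𝓝 0) := by
  simpa [sub_div] using (tendsto_const_nhds (x := L)).div_atTop tendsto_id |>.sub
    (tendsto_pow_log_div_mul_add_atTop 1 0 1 one_ne_zero)

lemma tendsto_tailLevel_atTop (L : ℝ) : Tendsto (tailLevel L) atTop atTop :=
  tendsto_id.atTop_add (tendsto_log_sub_div_atTop L)

lemma tendsto_exp_sub_sq_div_two_div_tailLevel (L : ℝ) :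
    Tendsto (fun s ↦ exp (s ^ 2 / 2 - tailLevel L s ^ 2 / 2) / tailLevel L s) atTop
      (𝓝 (exp (-L))) := by
  have hu := tendsto_log_sub_div_atTop L
  have hgauss : Tendsto (fun s ↦ exp (-((L - log s) / s) ^ 2 / 2)) atTop (𝓝 1) := by
    simpa [Function.comp_def] using (continuous_exp.tendsto _).comp ((hu.pow 2).neg.div_const 2)
  have hratio : Tendsto (fun s ↦ (1 + (L - log s) / s / s)⁻¹) atTop (𝓝 1) := by
    simpa using
      ((tendsto_const_nhds (x := (1 : ℝ))).add (hu.div_atTop tendsto_id)).inv₀ (by norm_num)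
  simpa using ((hgauss.mul hratio).const_mul (exp (-L))).congr' <| by
    filter_upwards [eventually_gt_atTop 0, (tendsto_tailLevel_atTop L).eventually_gt_atTop 0]
      with s hs ht
    have hexponent : s ^ 2 / 2 - tailLevel L s ^ 2 / 2
        = -L + log s + -((L - log s) / s) ^ 2 / 2 := by
      unfold tailLevel
      field_simp
      ring
    have hratio_eq : 1 + (L - log s) / s / s = tailLevel L s / s := by
      unfold tailLevel
      field_simp
    rw [hexponent, exp_add, exp_add, exp_log hs, hratio_eq, inv_div]
    field_simp

lemma setOf_exp_mul_gt_eq_Ioi {a M : ℝ} (ha : 0 < a) (hM : 0 < M) :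
    {y | exp (a * y) > M} = Ioi (log M / a) := by
  ext y
  simp [div_lt_iff₀' ha, log_lt_iff_lt_exp hM]

lemma log_div_eq_tailLevel {β x n : ℝ} (hβ : 0 < β) (hx : 0 < x) (hn : 0 < n) :
    log ((2 * n) ^ (-β / (2 * √2)) * exp (√2 * β * n) * x) / (β * √n)
      = tailLevel (√2 * log x / β) √(2 * n) := by
  rw [log_mul (by positivity) hx.ne', log_mul (by positivity) (exp_ne_zero _),
    log_rpow (by positivity), log_exp, tailLevel, log_sqrt (by positivity), sqrt_mul zero_le_two]
  have h2 : √2 ^ 2 = 2 := sq_sqrt zero_le_two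
  have hn' : √n ^ 2 = n := sq_sqrt hn.le
  field_simp
  rw [h2, hn']
  ring

theorem tendsto_exp_sq_div_two_mul_gaussianReal_Ioi_tailLevel (L : ℝ) :
    Tendsto (fun s ↦ exp (s ^ 2 / 2) * (gaussianReal 0 1 (Ioi (tailLevel L s))).toReal) atTop
      (𝓝 (exp (-L) / √(2 * π))) := by
  have h := ((tendsto_gaussianReal_Ioi_mul_atTop.comp (tendsto_tailLevel_atTop L)).mul
    (tendsto_exp_sub_sq_div_two_div_tailLevel L)).div_const √(2 * π)
  rw [one_mul] at h
  refine h.congr' ?_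
  filter_upwards [(tendsto_tailLevel_atTop L).eventually_gt_atTop 0] with s ht
  rw [Function.comp_apply, exp_sub]
  field_simp

/-- For `β > 0` and `γ_n = (2n)^{−β/(2√2)}·exp(√2βn)`, for every `x > 0`,
`⌊e^n⌋·P(exp(β√n·ξ) > γ_n·x) → (1/√(2π))·x^{−√2/β}` as `n → ∞`. -/
theorem exceedance_count_limit (β : ℝ) (hβ : 0 < β) (x : ℝ) (hx : 0 < x) :
    Tendsto (fun n : ℕ =>
        (⌊Real.exp n⌋ : ℝ) *
          ((gaussianReal 0 1)
            {y : ℝ | Real.exp (β * Real.sqrt n * y) >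
              ((2 * n : ℝ) ^ (-β / (2 * Real.sqrt 2)) * Real.exp (Real.sqrt 2 * β * n)) * x}).toReal)
      atTop
      (nhds ((1 / Real.sqrt (2 * Real.pi)) * x ^ (-Real.sqrt 2 / β))) := by
  have hfloor : Tendsto (fun n : ℕ ↦ (⌊exp n⌋ : ℝ) / exp n) atTop (𝓝 1) :=
    tendsto_int_floor_div_atTop.comp (tendsto_exp_atTop.comp tendsto_natCast_atTop_atTop)
  have hscale : Tendsto (fun n : ℕ ↦ √(2 * n)) atTop atTop :=
    tendsto_sqrt_atTop.comp (tendsto_natCast_atTop_atTop.const_mul_atTop two_pos)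
  have h := hfloor.mul
    ((tendsto_exp_sq_div_two_mul_gaussianReal_Ioi_tailLevel (√2 * log x / β)).comp hscale)
  have hlimit : exp (-(√2 * log x / β)) / √(2 * π) = 1 / √(2 * π) * x ^ (-√2 / β) := by
    rw [rpow_def_of_pos hx, one_div, ← div_eq_inv_mul]
    ring_nf
  rw [one_mul, hlimit] at h
  refine h.congr' ?_
  filter_upwards [eventually_gt_atTop 0] with n (hn : 0 < n)
  have hn_pos : (0 : ℝ) < n := Nat.cast_pos.mpr hn
  rw [Function.comp_apply, setOf_exp_mul_gt_eq_Ioi (by positivity) (by positivity),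
    log_div_eq_tailLevel hβ hx hn_pos, sq_sqrt (by positivity)]
  field_simp
end

section
/- Fix a ∈ ℝ, σ > 0, β > 0 with a + √2·σ − 2β > 0. Define γ_n = exp(βan)·(2n)^{−βσ/(2√2)}·exp(√2·βσ·n) and J_n(2,τ) = ⌊e^n⌋·∫_0^τ x² dμ_n(x), where μ_n is the law of exp(β√n·ξ)/γ_n with ξ standard normal. Then (1/n)·log J_n(2,τ) → 2β² − 2(a+√2σ)β + 1 as n → ∞, for every τ > 0. -/
open MeasureTheory ProbabilityTheory Filter Real Set Topology
open scoped NNReal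

/-!
Under `y ↦ exp (b y) / γ` the Gaussian becomes lognormal, and its moments truncated to `(0, τ]`
are explicit: substituting `x = exp (b y) / γ` and completing the square (an exponential tilt of
the Gaussian, which only shifts its mean) gives
`∫_(0,τ] x ^ k = exp (v (k b)² / 2) γ⁻ᵏ Φ (log (τ γ) / b - v k b)`, with `Φ` the cdf of `N(0, v)`.
For `b = β √n` and `log γ_n ~ β (a + √2 σ) n` the argument of `Φ` grows like
`√n (a + √2 σ - 2 β) → ∞`, so `Φ → 1` does not affect the exponential rate, and the remaining
factors `⌊eⁿ⌋`, `exp (2 β² n)` and `γ_n⁻²` contribute `1 + 2 β² - 2 β (a + √2 σ)`.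
-/

namespace ProbabilityTheory

lemma gaussianPDFReal_mul_exp_mul (μ : ℝ) (v : ℝ≥0) (c y : ℝ) :
    gaussianPDFReal μ v y * exp (c * y)
      = exp (c * μ + v * c ^ 2 / 2) * gaussianPDFReal (μ + v * c) v y := by
  rcases eq_or_ne v 0 with rfl | hv
  · simp [gaussianPDFReal_zero_var]
  have hv' : (v : ℝ) ≠ 0 := NNReal.coe_ne_zero.mpr hv
  simp only [gaussianPDFReal]
  rw [mul_assoc, ← exp_add, mul_left_comm, ← exp_add]
  congr 2
  field_simp
  ring

lemma setIntegral_exp_mul_gaussianReal (μ : ℝ) {v : ℝ≥0} (hv : v ≠ 0) (c : ℝ) {s : Set ℝ}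
    (hs : MeasurableSet s) :
    ∫ y in s, exp (c * y) ∂gaussianReal μ v
      = exp (c * μ + v * c ^ 2 / 2) * (gaussianReal (μ + v * c) v).real s := by
  rw [gaussianReal_of_var_ne_zero _ hv, setIntegral_withDensity_eq_setIntegral_toReal_smul' s
    (measurable_gaussianPDF μ v) (ae_of_all _ fun _ => gaussianPDF_lt_top)]
  simp only [toReal_gaussianPDF, smul_eq_mul, gaussianPDFReal_mul_exp_mul μ v]
  rw [integral_const_mul, measureReal_def, gaussianReal_apply_eq_integral _ hv,
    ENNReal.toReal_ofReal (setIntegral_nonneg hs fun _ _ => gaussianPDFReal_nonneg _ _ _)]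

lemma gaussianReal_real_Iic_eq_cdf (μ : ℝ) (v : ℝ≥0) (t : ℝ) :
    (gaussianReal μ v).real (Iic t) = cdf (gaussianReal 0 v) (t - μ) := by
  rw [cdf_eq_real, ← zero_add μ, ← gaussianReal_map_add_const, map_measureReal_apply
    (measurable_add_const μ) measurableSet_Iic]
  congr 1
  ext y
  simp [le_sub_iff_add_le]

lemma cdf_gaussianReal_pos (μ : ℝ) {v : ℝ≥0} (hv : v ≠ 0) (t : ℝ) :
    0 < cdf (gaussianReal μ v) t := by
  rw [cdf_eq_real]
  refine ENNReal.toReal_pos (fun h0 => ?_) (measure_ne_top _ _)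
  simpa using gaussianReal_absolutelyContinuous' μ hv h0

lemma setIntegral_Ioc_pow_map_exp_div_gaussianReal {v : ℝ≥0} (hv : v ≠ 0) (k : ℕ) {b γ τ : ℝ}
    (hb : 0 < b) (hγ : 0 < γ) (hτ : 0 < τ) :
    ∫ x in Ioc 0 τ, x ^ k ∂(gaussianReal 0 v).map (fun y => exp (b * y) / γ)
      = exp (v * (k * b) ^ 2 / 2) / γ ^ k
          * cdf (gaussianReal 0 v) (log (τ * γ) / b - v * (k * b)) := by
  have hf : Measurable fun y => exp (b * y) / γ := by fun_prop
  have hpre : (fun y => exp (b * y) / γ) ⁻¹' Ioc 0 τ = Iic (log (τ * γ) / b) := by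
    ext y
    simp only [mem_preimage, mem_Ioc, mem_Iic, div_pos (exp_pos _) hγ, true_and]
    rw [div_le_iff₀ hγ, ← le_log_iff_exp_le (by positivity), le_div_iff₀ hb, mul_comm]
  have hpow : ∀ y, (exp (b * y) / γ) ^ k = (γ ^ k)⁻¹ * exp ((k * b) * y) := fun y => by
    rw [div_pow, ← exp_nat_mul, div_eq_inv_mul]
    ring_nf
  rw [setIntegral_map measurableSet_Ioc (by fun_prop) hf.aemeasurable, hpre]
  simp only [hpow]
  rw [integral_const_mul, setIntegral_exp_mul_gaussianReal 0 hv _ measurableSet_Iic,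
    gaussianReal_real_Iic_eq_cdf]
  simp only [mul_zero, zero_add]
  ring

lemma log_setIntegral_Ioc_pow_map_exp_div_gaussianReal {v : ℝ≥0} (hv : v ≠ 0) (k : ℕ)
    {b γ τ : ℝ} (hb : 0 < b) (hγ : 0 < γ) (hτ : 0 < τ) :
    log (∫ x in Ioc 0 τ, x ^ k ∂(gaussianReal 0 v).map (fun y => exp (b * y) / γ))
      = v * (k * b) ^ 2 / 2 - k * log γ
          + log (cdf (gaussianReal 0 v) (log (τ * γ) / b - v * (k * b))) := by
  rw [setIntegral_Ioc_pow_map_exp_div_gaussianReal hv k hb hγ hτ,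
    log_mul (div_pos (exp_pos _) (pow_pos hγ k)).ne' (cdf_gaussianReal_pos 0 hv _).ne',
    log_div (exp_ne_zero _) (pow_pos hγ k).ne', log_exp, log_pow]

end ProbabilityTheory

lemma tendsto_log_div_natCast_of_tendsto {u : ℕ → ℝ} {c : ℝ} (hc : c ≠ 0)
    (hu : Tendsto u atTop (𝓝 c)) : Tendsto (fun n => log (u n) / n) atTop (𝓝 0) := by
  simpa using ((continuousAt_log hc).tendsto.comp hu).div_atTop tendsto_natCast_atTop_atTop

lemma tendsto_log_intFloor_exp_div : Tendsto (fun n : ℕ => log ⌊exp n⌋ / n) atTop (𝓝 1) := by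
  have hratio : Tendsto (fun n : ℕ => (⌊exp n⌋ : ℝ) / exp n) atTop (𝓝 1) := by
    refine (tendsto_nat_floor_div_atTop.comp
      (tendsto_exp_atTop.comp tendsto_natCast_atTop_atTop)).congr fun n => ?_
    simp [natCast_floor_eq_intCast_floor (exp_pos (n : ℝ)).le]
  have hlim := (tendsto_log_div_natCast_of_tendsto one_ne_zero hratio).add_const 1
  rw [zero_add] at hlim
  refine hlim.congr' ?_
  filter_upwards [eventually_ne_atTop 0] with n hn
  have hfloor : (⌊exp n⌋ : ℝ) ≠ 0 :=
    Int.cast_ne_zero.mpr (Int.floor_pos.mpr (one_le_exp (Nat.cast_nonneg n))).ne'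
  rw [log_div hfloor (exp_ne_zero _), log_exp]
  field_simp
  ring

lemma tendsto_log_exp_mul_rpow_mul_exp_div (p q r : ℝ) :
    Tendsto (fun n : ℕ => log (exp (p * n) * (2 * n : ℝ) ^ q * exp (r * n)) / n) atTop
      (𝓝 (p + r)) := by
  have hlog : Tendsto (fun n : ℕ => log (2 * n) / n) atTop (𝓝 0) := by
    have h2n := (tendsto_natCast_atTop_atTop (R := ℝ)).const_mul_atTop two_pos
    have hlim := ((tendsto_pow_log_div_mul_add_atTop 1 0 1 one_ne_zero).comp h2n).const_mul 2
    rw [mul_zero] at hlim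
    refine hlim.congr' ?_
    filter_upwards [eventually_ne_atTop 0] with n hn
    simp only [pow_one, one_mul, add_zero, Function.comp_apply]
    field_simp
  have hlim := ((hlog.const_mul q).const_add p).add_const r
  rw [mul_zero, add_zero] at hlim
  refine hlim.congr' ?_
  filter_upwards [eventually_ne_atTop 0] with n hn
  have h2n : (0 : ℝ) < 2 * n := by positivity
  rw [log_mul (by positivity) (exp_ne_zero _), log_mul (exp_ne_zero _) (by positivity),
    log_exp, log_exp, log_rpow h2n]
  field_simp

lemma tendsto_div_mul_sqrt_sub_mul_sqrt_atTop {ℓ : ℕ → ℝ} {L b m : ℝ} (hb : 0 < b)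
    (hℓ : Tendsto (fun n => ℓ n / n) atTop (𝓝 L)) (hL : m * b < L) :
    Tendsto (fun n : ℕ => ℓ n / (b * √n) - m * √n) atTop atTop := by
  have hlim : Tendsto (fun n => ℓ n / n / b - m) atTop (𝓝 (L / b - m)) :=
    (hℓ.div_const b).sub_const m
  have hsqrt : Tendsto (fun n : ℕ => √(n : ℝ)) atTop atTop :=
    tendsto_sqrt_atTop.comp tendsto_natCast_atTop_atTop
  refine (hsqrt.atTop_mul_pos (by rwa [sub_pos, lt_div_iff₀ hb]) hlim).congr' ?_
  filter_upwards [eventually_ne_atTop 0] with n hn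
  have hs : 0 < √(n : ℝ) := by positivity
  field_simp
  rw [sq_sqrt (Nat.cast_nonneg _)]

lemma tendsto_log_mul_setIntegral_Ioc_pow_map_exp_div_gaussianReal {v : ℝ≥0} (hv : v ≠ 0)
    (k : ℕ) {β τ R L : ℝ} {F γ : ℕ → ℝ} (hβ : 0 < β) (hτ : 0 < τ)
    (hFpos : ∀ᶠ n in atTop, 0 < F n) (hF : Tendsto (fun n => log (F n) / n) atTop (𝓝 R))
    (hγpos : ∀ᶠ n in atTop, 0 < γ n) (hγ : Tendsto (fun n => log (γ n) / n) atTop (𝓝 L))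
    (hL : v * k * β ^ 2 < L) :
    Tendsto (fun n : ℕ => 1 / (n : ℝ) * log (F n *
        ∫ x in Ioc 0 τ, x ^ k ∂(gaussianReal 0 v).map (fun y => exp (β * √n * y) / γ n)))
      atTop (𝓝 (R + v * k ^ 2 * β ^ 2 / 2 - k * L)) := by
  set S : ℕ → ℝ := fun n => log (τ * γ n) / (β * √n) - v * k * β * √n
  have hτγ : Tendsto (fun n => log (τ * γ n) / n) atTop (𝓝 L) := by
    have hτ' := tendsto_log_div_natCast_of_tendsto hτ.ne' (tendsto_const_nhds (x := τ))
    refine (zero_add L ▸ hτ'.add hγ).congr' ?_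
    filter_upwards [hγpos] with n hγn
    rw [log_mul hτ.ne' hγn.ne', add_div]
  have hS : Tendsto S atTop atTop :=
    tendsto_div_mul_sqrt_sub_mul_sqrt_atTop hβ hτγ (by linarith)
  have hcdf : Tendsto (fun n => log (cdf (gaussianReal 0 v) (S n)) / n) atTop (𝓝 0) :=
    tendsto_log_div_natCast_of_tendsto one_ne_zero ((tendsto_cdf_atTop _).comp hS)
  have hlim := ((hF.add_const (v * k ^ 2 * β ^ 2 / 2)).sub (hγ.const_mul (k : ℝ))).add hcdf
  rw [add_zero] at hlim
  refine hlim.congr' ?_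
  filter_upwards [hFpos, hγpos, eventually_ne_atTop 0] with n hFn hγn hn
  have harg : log (τ * γ n) / (β * √n) - v * (k * (β * √n)) = S n := by
    simp only [S]
    ring
  have hb : 0 < β * √n := by positivity
  have hmoment : 0 < ∫ x in Ioc 0 τ, x ^ k
      ∂(gaussianReal 0 v).map (fun y => exp (β * √n * y) / γ n) := by
    rw [setIntegral_Ioc_pow_map_exp_div_gaussianReal hv k hb hγn hτ]
    exact mul_pos (by positivity) (cdf_gaussianReal_pos 0 hv _)
  rw [log_mul hFn.ne' hmoment.ne',
    log_setIntegral_Ioc_pow_map_exp_div_gaussianReal hv k hb hγn hτ, harg]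
  field_simp
  rw [sq_sqrt n.cast_nonneg]
  ring

theorem truncated_second_moment_rate_general (a σ β : ℝ) (hβ : 0 < β)
    (h : a + Real.sqrt 2 * σ - 2 * β > 0) (τ : ℝ) (hτ : 0 < τ) :
    Tendsto (fun n : ℕ =>
        (1 / (n : ℝ)) * Real.log
          ((⌊Real.exp n⌋ : ℝ) *
            ∫ x in Set.Ioc (0 : ℝ) τ, x ^ 2
              ∂(Measure.map
                  (fun y => Real.exp (β * Real.sqrt n * y) /
                    (Real.exp (β * a * n) * (2 * n : ℝ) ^ (-(β * σ) / (2 * Real.sqrt 2))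
                      * Real.exp (Real.sqrt 2 * (β * σ) * n)))
                  (gaussianReal 0 1))))
      atTop
      (nhds (2 * β ^ 2 - 2 * (a + Real.sqrt 2 * σ) * β + 1)) := by
  have hfloor : ∀ᶠ n : ℕ in atTop, (0 : ℝ) < ⌊exp n⌋ :=
    .of_forall fun n => Int.cast_pos.mpr (Int.floor_pos.mpr (one_le_exp n.cast_nonneg))
  have hγ : ∀ᶠ n : ℕ in atTop, 0 < exp (β * a * n) * (2 * n : ℝ) ^ (-(β * σ) / (2 * √2))
      * exp (√2 * (β * σ) * n) := by
    filter_upwards [eventually_ne_atTop 0] with n hn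
    have h2n : (0 : ℝ) < 2 * n := by positivity
    positivity
  convert tendsto_log_mul_setIntegral_Ioc_pow_map_exp_div_gaussianReal one_ne_zero 2 hβ hτ hfloor
    tendsto_log_intFloor_exp_div hγ (tendsto_log_exp_mul_rpow_mul_exp_div _ _ _) ?_ using 2
  · push_cast
    ring
  · push_cast
    nlinarith

/-- Exponential growth rate of the truncated second moment `J_n(2,τ)` in the regime
`a + √2σ − 2β > 0`: `(1/n)·log J_n(2,τ) → 2β² − 2(a+√2σ)β + 1`. -/
theorem truncated_second_moment_rate (a σ β : ℝ) (hσ : 0 < σ) (hβ : 0 < β)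
    (h : a + Real.sqrt 2 * σ - 2 * β > 0) (τ : ℝ) (hτ : 0 < τ) :
    Tendsto (fun n : ℕ =>
        (1 / (n : ℝ)) * Real.log
          ((⌊Real.exp n⌋ : ℝ) *
            ∫ x in Set.Ioc (0 : ℝ) τ, x ^ 2
              ∂(Measure.map
                  (fun y => Real.exp (β * Real.sqrt n * y) /
                    (Real.exp (β * a * n) * (2 * n : ℝ) ^ (-(β * σ) / (2 * Real.sqrt 2))
                      * Real.exp (Real.sqrt 2 * (β * σ) * n)))
                  (gaussianReal 0 1))))
      atTop
      (nhds (2 * β ^ 2 - 2 * (a + Real.sqrt 2 * σ) * β + 1)) :=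
  truncated_second_moment_rate_general a σ β hβ h τ hτ
end

section
/- For every β > 0 and every sequence γ_n with log γ_n = β√n·(√2·√n − log(√(2n))/√(2n)), one has, for each fixed x > 0: κ_n(x) := log(γ_n x)/(β√n) → ∞ and ⌊e^n⌋·(√(2π)·κ_n(x))^{−1}·exp(−κ_n(x)²/2) → (1/√(2π))·x^{−√2/β} as n → ∞. -/
/-! Put `s = √(2n)`. The normalisation of `γ_n` makes `κ_n(x) = s + t_n` with
`s·t_n = (√2/β)·log x − log s`, so `t_n → 0`. Expanding the square,
`κ⁻¹·exp(−κ²/2) ~ s⁻¹·exp(−s²/2 − s·t_n) = e^{−n}·x^{−√2/β}`, and `⌊e^n⌋ ~ e^n`. -/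

open Filter Real Asymptotics Topology

theorem isEquivalent_int_floor :
    (fun y : ℝ => (⌊y⌋ : ℝ)) ~[atTop] fun y => y :=
  isEquivalent_nat_floor.congr_left <| (eventually_ge_atTop 0).mono fun _ hy =>
    natCast_floor_eq_intCast_floor hy

theorem isEquivalent_inv_mul_exp_neg_sq_half_add {α : Type*} {l : Filter α} {s t : α → ℝ}
    (hs : Tendsto s l atTop) (ht : Tendsto t l (𝓝 0)) :
    (fun a => (s a + t a)⁻¹ * exp (-(s a + t a) ^ 2 / 2)) ~[l]
      fun a => (s a)⁻¹ * exp (-s a ^ 2 / 2 - s a * t a) := by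
  refine isEquivalent_of_tendsto_one ?_
  have hratio : ∀ᶠ a in l, (1 + t a / s a)⁻¹ * exp (-t a ^ 2 / 2) =
      ((s a + t a)⁻¹ * exp (-(s a + t a) ^ 2 / 2)) /
        ((s a)⁻¹ * exp (-s a ^ 2 / 2 - s a * t a)) := by
    filter_upwards [hs.eventually_gt_atTop 0] with a ha
    have hexp : exp (-(s a + t a) ^ 2 / 2) =
        exp (-s a ^ 2 / 2 - s a * t a) * exp (-t a ^ 2 / 2) := by
      rw [← exp_add]; ring_nf
    rw [hexp, one_add_div ha.ne']
    field_simp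
  have hlim : Tendsto (fun a => (1 + t a / s a)⁻¹ * exp (-t a ^ 2 / 2)) l
      (𝓝 ((1 + 0)⁻¹ * exp (-0 ^ 2 / 2))) :=
    ((tendsto_const_nhds.add (ht.div_atTop hs)).inv₀ (by norm_num)).mul
      ((continuous_exp.tendsto _).comp ((ht.pow 2).neg.div_const 2))
  simpa [Pi.div_def] using hlim.congr' hratio

theorem log_mul_div_eq_sqrt_two_mul_add {β γ x : ℝ} {n : ℕ} (hβ : β ≠ 0) (hn : 1 ≤ n)
    (hγ : 0 < γ) (hx : 0 < x)
    (hlogγ : log γ = β * √n * (√2 * √n - log √(2 * n) / (√2 * √n))) :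
    log (γ * x) / (β * √n) = √(2 * n) + (√2 / β * log x - log √(2 * n)) / √(2 * n) := by
  have hn' : 0 < √(n : ℝ) := sqrt_pos.2 (by exact_mod_cast hn)
  rw [log_mul hγ.ne' hx.ne', hlogγ, sqrt_mul zero_le_two]
  field_simp
  ring

theorem exp_sq_half_mul_inv_mul_exp_eq_rpow {s c x : ℝ} (hs : 0 < s) (hx : 0 < x) :
    exp (s ^ 2 / 2) * (s⁻¹ * exp (-s ^ 2 / 2 - s * ((c * log x - log s) / s))) = x ^ (-c) := by
  have hexp :
      -s ^ 2 / 2 - s * ((c * log x - log s) / s) = -(s ^ 2 / 2) + log s + log x * -c := by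
    field_simp
    ring
  rw [hexp, exp_add, exp_add, exp_log hs, exp_neg, ← rpow_def_of_pos hx]
  field_simp

/-- Analytic core of the stable-limit computation: if `γ_n > 0` with
`log γ_n = β√n·(√2·√n − log(√(2n))/(√2·√n))`, then for every fixed `x > 0`,
`κ_n(x) = log(γ_n x)/(β√n) → ∞` and
`⌊e^n⌋·(√(2π)·κ_n(x))⁻¹·exp(−κ_n(x)²/2) → (1/√(2π))·x^{−√2/β}`. -/
theorem kappa_limit (β : ℝ) (hβ : 0 < β) (γ : ℕ → ℝ) (hγpos : ∀ n, 0 < γ n)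
    (hγ : ∀ n : ℕ, 1 ≤ n →
      Real.log (γ n) = β * Real.sqrt n *
        (Real.sqrt 2 * Real.sqrt n
          - Real.log (Real.sqrt (2 * n)) / (Real.sqrt 2 * Real.sqrt n)))
    (x : ℝ) (hx : 0 < x) :
    Tendsto (fun n : ℕ => Real.log (γ n * x) / (β * Real.sqrt n)) atTop atTop ∧
    Tendsto (fun n : ℕ =>
        (⌊Real.exp n⌋ : ℝ) *
          (Real.sqrt (2 * Real.pi) * (Real.log (γ n * x) / (β * Real.sqrt n)))⁻¹ *
          Real.exp (-(Real.log (γ n * x) / (β * Real.sqrt n)) ^ 2 / 2))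
      atTop
      (nhds ((1 / Real.sqrt (2 * Real.pi)) * x ^ (-Real.sqrt 2 / β))) := by
  set s : ℕ → ℝ := fun n => √(2 * n)
  set t : ℕ → ℝ := fun n => (√2 / β * log x - log (s n)) / s n
  have hs : Tendsto s atTop atTop :=
    tendsto_sqrt_atTop.comp (tendsto_natCast_atTop_atTop.const_mul_atTop two_pos)
  have ht : Tendsto t atTop (𝓝 0) := by
    simpa [t, sub_div] using (tendsto_const_nhds.div_atTop hs).sub
      (isLittleO_log_id_atTop.tendsto_div_nhds_zero.comp hs)
  have hκ : ∀ᶠ n in atTop, log (γ n * x) / (β * √n) = s n + t n :=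
    (eventually_ge_atTop 1).mono fun n hn =>
      log_mul_div_eq_sqrt_two_mul_add hβ.ne' hn (hγpos n) hx (hγ n hn)
  refine ⟨(hs.atTop_add ht).congr' (hκ.mono fun _ h => h.symm), ?_⟩
  have hequiv := (isEquivalent_int_floor.comp_tendsto
    (tendsto_exp_atTop.comp tendsto_natCast_atTop_atTop)).mul
    (isEquivalent_inv_mul_exp_neg_sq_half_add hs ht)
  have hconst : ∀ᶠ n : ℕ in atTop,
      x ^ (-√2 / β) = exp n * ((s n)⁻¹ * exp (-s n ^ 2 / 2 - s n * t n)) :=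
    (eventually_ge_atTop 1).mono fun n hn => by
      have hn' : (0 : ℝ) < 2 * n := by positivity
      have hsq : s n ^ 2 / 2 = n := by simp only [s, sq_sqrt hn'.le]; ring
      rw [← hsq, exp_sq_half_mul_inv_mul_exp_eq_rpow (sqrt_pos.2 hn') hx, neg_div]
  refine ((hequiv.symm.tendsto_nhds (tendsto_const_nhds.congr' hconst)).const_mul
    (1 / √(2 * π))).congr' ?_
  filter_upwards [hκ] with n hn
  simp only [hn, Function.comp_apply, Pi.mul_apply, mul_inv]
  ring
end
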